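/- (Theorem 3, discrete form.) Fix t ∈ 𝒯. Let P and Q be two probability measures on the same finite space, each satisfying Assumption 3, each with P(X=x, T=t, R^X=1, R^T=1) > 0 for all x ∈ 𝒳 and P(R^Y=1 | T=t, Y=y, R^X=1, R^T=1) > 0 for all y ∈ 𝒴 (and likewise for Q). Suppose P and Q induce the same observed-data conditionals at t: for all x ∈ 𝒳 and y ∈ 𝒴, P(Y=y, R^Y=1 | T=t, X=x, R^X=1, R^T=1) = Q(Y=y, R^Y=1 | T=t, X=x, R^X=1, R^T=1) and P(R^Y=0 | T=t, X=x, R^X=1, R^T=1) = Q(R^Y=0 | T=t, X=x, R^X=1, R^T=1). If the |𝒳| × |𝒴| matrix Θ_t with entries Θ_t(x,y) = P(Y=y, R^Y=1 | T=t, X=x, R^X=1, R^T=1) has rank |𝒴|, then for all x ∈ 𝒳 and y ∈ 𝒴, P(Y=y | T=t, X=x) = Q(Y=y | T=t, X=x). In particular the conditional outcome distribution, and hence the conditional average treatment effect, is identified from the observed data. -/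
import Mathlib


open scoped Classical
noncomputable section

namespace CATEMNAR

variable {Ω : Type*} [Fintype Ω]

/-- Probability of the event `E` under the pmf `p` on the finite space `Ω`. -/
def Pr (p : Ω → ℝ) (E : Ω → Prop) : ℝ := ∑ ω, if E ω then p ω else 0

/-- Conditional probability `P(E | C)` (junk value `0` when `P(C) = 0`). -/
def CPr (p : Ω → ℝ) (E C : Ω → Prop) : ℝ := Pr p (fun ω => E ω ∧ C ω) / Pr p C

/-- Conditional independence `A ⫫ B | C` under `p`: for all values `a, b, c` with
`P(C = c) > 0`, `P(A = a, B = b | C = c) = P(A = a | C = c) * P(B = b | C = c)`. -/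
def CondIndep {α β γ : Type*} (p : Ω → ℝ) (A : Ω → α) (B : Ω → β) (C : Ω → γ) : Prop :=
  ∀ (a : α) (b : β) (c : γ), 0 < Pr p (fun ω => C ω = c) →
    CPr p (fun ω => A ω = a ∧ B ω = b) (fun ω => C ω = c) =
      CPr p (fun ω => A ω = a) (fun ω => C ω = c) *
        CPr p (fun ω => B ω = b) (fun ω => C ω = c)

variable (p : Ω → ℝ)
lemma Pr_nonneg (hp0 : ∀ ω, 0 ≤ p ω) (E : Ω → Prop) : 0 ≤ Pr p E :=
  Finset.sum_nonneg fun ω _ => by split <;> simp [hp0 ω]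
lemma Pr_congr {E F : Ω → Prop} (h : ∀ ω, E ω ↔ F ω) : Pr p E = Pr p F :=
  Finset.sum_congr rfl fun ω _ => if_congr (h ω) rfl rfl
lemma Pr_mono (hp0 : ∀ ω, 0 ≤ p ω) {E F : Ω → Prop} (h : ∀ ω, E ω → F ω) :
    Pr p E ≤ Pr p F :=
  Finset.sum_le_sum fun ω _ => by
    by_cases hE : E ω
    · rw [if_pos hE, if_pos (h ω hE)]
    · rw [if_neg hE]; split <;> simp [hp0 ω]
lemma CPr_congr {E F C D : Ω → Prop} (hEF : ∀ ω, E ω ↔ F ω) (hCD : ∀ ω, C ω ↔ D ω) :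
    CPr p E C = CPr p F D := by
  unfold CPr
  rw [Pr_congr p (fun ω => and_congr (hEF ω) (hCD ω)), Pr_congr p hCD]
lemma CPr_chain (hp0 : ∀ ω, 0 ≤ p ω) (A B C : Ω → Prop) :
    CPr p (fun ω => A ω ∧ B ω) C = CPr p A (fun ω => B ω ∧ C ω) * CPr p B C := by
  unfold CPr
  rcases eq_or_lt_of_le (Pr_nonneg p hp0 (fun ω => B ω ∧ C ω)) with h | h
  · have h1 : Pr p (fun ω => (A ω ∧ B ω) ∧ C ω) = 0 :=
      le_antisymm (h ▸ Pr_mono p hp0 (fun ω hω => ⟨hω.1.2, hω.2⟩)) (Pr_nonneg p hp0 _)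
    rw [h1, ← h]; simp
  · rw [Pr_congr p (show ∀ ω, (A ω ∧ B ω ∧ C ω) ↔ ((A ω ∧ B ω) ∧ C ω) from
      fun ω => (and_assoc).symm)]
    rw [div_mul_div_comm, mul_comm (Pr p fun ω => (A ω ∧ B ω) ∧ C ω),
      mul_div_mul_left _ _ h.ne']
lemma CPr_drop (hp0 : ∀ ω, 0 ≤ p ω) {A B C : Ω → Prop}
    (hBC : 0 < Pr p (fun ω => B ω ∧ C ω))
    (hCI : CPr p (fun ω => A ω ∧ B ω) C = CPr p A C * CPr p B C) :
    CPr p A (fun ω => B ω ∧ C ω) = CPr p A C := by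
  have hC : 0 < Pr p C := lt_of_lt_of_le hBC (Pr_mono p hp0 fun ω hω => hω.2)
  have hchain := CPr_chain p hp0 A B C
  rw [hCI] at hchain
  exact mul_right_cancel₀ (ne_of_gt (div_pos hBC hC)) hchain.symm
lemma Pr_sum_fiber {𝒴 : Type*} [Fintype 𝒴] (Y : Ω → 𝒴) (C : Ω → Prop) :
    ∑ y, Pr p (fun ω => Y ω = y ∧ C ω) = Pr p C := by
  unfold Pr
  rw [Finset.sum_comm]
  refine Finset.sum_congr rfl fun ω _ => ?_
  by_cases hC : C ω
  · simp only [hC, and_true]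
    rw [Finset.sum_ite_eq Finset.univ (Y ω) (fun _ => p ω)]; simp
  · simp [hC]
lemma CPr_sum_one {𝒴 : Type*} [Fintype 𝒴] (Y : Ω → 𝒴) {C : Ω → Prop}
    (hC : 0 < Pr p C) : ∑ y, CPr p (fun ω => Y ω = y) C = 1 := by
  unfold CPr
  rw [← Finset.sum_div, Pr_sum_fiber p Y C, div_self hC.ne']

lemma key {𝒳 𝒯 𝒴 : Type*} (hp0 : ∀ ω, 0 ≤ p ω)
    (X : Ω → 𝒳) (T : Ω → 𝒯) (Y : Ω → 𝒴) (RX RT RY : Ω → Bool) (t : 𝒯)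
    (hRX : CondIndep p RX Y (fun ω => (X ω, T ω)))
    (hRT : CondIndep p RT Y (fun ω => (X ω, T ω, RX ω)))
    (hRY : CondIndep p RY X (fun ω => (T ω, Y ω, RX ω, RT ω)))
    (hpos : ∀ x, 0 < Pr p (fun ω => X ω = x ∧ T ω = t ∧ RX ω = true ∧ RT ω = true))
    (x : 𝒳) (y : 𝒴) :
    CPr p (fun ω => Y ω = y ∧ RY ω = true)
        (fun ω => T ω = t ∧ X ω = x ∧ RX ω = true ∧ RT ω = true) =
      CPr p (fun ω => RY ω = true)
          (fun ω => T ω = t ∧ Y ω = y ∧ RX ω = true ∧ RT ω = true) *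
        CPr p (fun ω => Y ω = y) (fun ω => T ω = t ∧ X ω = x) := by
  have hSx : 0 < Pr p (fun ω => T ω = t ∧ X ω = x ∧ RX ω = true ∧ RT ω = true) := by
    have h := hpos x
    rwa [Pr_congr p (show ∀ ω, (X ω = x ∧ T ω = t ∧ RX ω = true ∧ RT ω = true) ↔
      (T ω = t ∧ X ω = x ∧ RX ω = true ∧ RT ω = true) from fun ω => by tauto)] at h
  -- D3 := (X,T,RX) = (x,t,true), D2 := (X,T) = (x,t)
  have hD3 : 0 < Pr p (fun ω => (X ω, T ω, RX ω) = (x, t, true)) :=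
    lt_of_lt_of_le (hpos x) (Pr_mono p hp0 fun ω h => by
      simp only [Prod.mk.injEq]; exact ⟨h.1, h.2.1, h.2.2.1⟩)
  have hD2 : 0 < Pr p (fun ω => (X ω, T ω) = (x, t)) :=
    lt_of_lt_of_le (hpos x) (Pr_mono p hp0 fun ω h => by
      simp only [Prod.mk.injEq]; exact ⟨h.1, h.2.1⟩)
  -- step 1 : drop RT
  have hci1 : CPr p (fun ω => RT ω = true ∧ Y ω = y) (fun ω => (X ω, T ω, RX ω) = (x, t, true)) =
      CPr p (fun ω => RT ω = true) (fun ω => (X ω, T ω, RX ω) = (x, t, true)) *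
        CPr p (fun ω => Y ω = y) (fun ω => (X ω, T ω, RX ω) = (x, t, true)) :=
    hRT true y (x, t, true) hD3
  have hBC1 : 0 < Pr p (fun ω => RT ω = true ∧ (X ω, T ω, RX ω) = (x, t, true)) :=
    lt_of_lt_of_le (hpos x) (Pr_mono p hp0 fun ω h => by
      simp only [Prod.mk.injEq]; exact ⟨h.2.2.2, h.1, h.2.1, h.2.2.1⟩)
  have step1 : CPr p (fun ω => Y ω = y)
      (fun ω => RT ω = true ∧ (X ω, T ω, RX ω) = (x, t, true)) =
      CPr p (fun ω => Y ω = y) (fun ω => (X ω, T ω, RX ω) = (x, t, true)) :=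
    CPr_drop p hp0 hBC1 (by
      rw [CPr_congr p (fun ω => (and_comm : (Y ω = y ∧ RT ω = true) ↔ _))
        (fun ω => Iff.rfl), hci1, mul_comm])
  -- step 2 : drop RX
  have hci2 : CPr p (fun ω => RX ω = true ∧ Y ω = y) (fun ω => (X ω, T ω) = (x, t)) =
      CPr p (fun ω => RX ω = true) (fun ω => (X ω, T ω) = (x, t)) *
        CPr p (fun ω => Y ω = y) (fun ω => (X ω, T ω) = (x, t)) :=
    hRX true y (x, t) hD2
  have hBC2 : 0 < Pr p (fun ω => RX ω = true ∧ (X ω, T ω) = (x, t)) :=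
    lt_of_lt_of_le (hpos x) (Pr_mono p hp0 fun ω h => by
      simp only [Prod.mk.injEq]; exact ⟨h.2.2.1, h.1, h.2.1⟩)
  have step2 : CPr p (fun ω => Y ω = y) (fun ω => RX ω = true ∧ (X ω, T ω) = (x, t)) =
      CPr p (fun ω => Y ω = y) (fun ω => (X ω, T ω) = (x, t)) :=
    CPr_drop p hp0 hBC2 (by
      rw [CPr_congr p (fun ω => (and_comm : (Y ω = y ∧ RX ω = true) ↔ _))
        (fun ω => Iff.rfl), hci2, mul_comm])
  -- a-identity
  have ha : CPr p (fun ω => Y ω = y)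
      (fun ω => T ω = t ∧ X ω = x ∧ RX ω = true ∧ RT ω = true) =
      CPr p (fun ω => Y ω = y) (fun ω => T ω = t ∧ X ω = x) := by
    calc CPr p (fun ω => Y ω = y) (fun ω => T ω = t ∧ X ω = x ∧ RX ω = true ∧ RT ω = true)
        = CPr p (fun ω => Y ω = y)
            (fun ω => RT ω = true ∧ (X ω, T ω, RX ω) = (x, t, true)) :=
          CPr_congr p (fun ω => Iff.rfl) (fun ω => by simp only [Prod.mk.injEq]; try tauto)
      _ = CPr p (fun ω => Y ω = y) (fun ω => (X ω, T ω, RX ω) = (x, t, true)) := step1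
      _ = CPr p (fun ω => Y ω = y) (fun ω => RX ω = true ∧ (X ω, T ω) = (x, t)) :=
          CPr_congr p (fun ω => Iff.rfl) (fun ω => by simp only [Prod.mk.injEq]; try tauto)
      _ = CPr p (fun ω => Y ω = y) (fun ω => (X ω, T ω) = (x, t)) := step2
      _ = CPr p (fun ω => Y ω = y) (fun ω => T ω = t ∧ X ω = x) :=
          CPr_congr p (fun ω => Iff.rfl) (fun ω => by simp only [Prod.mk.injEq]; try tauto)
  -- chain
  have hchain : CPr p (fun ω => Y ω = y ∧ RY ω = true)
      (fun ω => T ω = t ∧ X ω = x ∧ RX ω = true ∧ RT ω = true) =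
      CPr p (fun ω => RY ω = true)
        (fun ω => Y ω = y ∧ T ω = t ∧ X ω = x ∧ RX ω = true ∧ RT ω = true) *
      CPr p (fun ω => Y ω = y)
        (fun ω => T ω = t ∧ X ω = x ∧ RX ω = true ∧ RT ω = true) := by
    rw [CPr_congr p (fun ω => (and_comm : (Y ω = y ∧ RY ω = true) ↔ _)) (fun ω => Iff.rfl)]
    exact CPr_chain p hp0 _ _ _
  rcases eq_or_lt_of_le (Pr_nonneg p hp0
      (fun ω => Y ω = y ∧ T ω = t ∧ X ω = x ∧ RX ω = true ∧ RT ω = true)) with h0 | hYS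
  · have hz : CPr p (fun ω => Y ω = y)
        (fun ω => T ω = t ∧ X ω = x ∧ RX ω = true ∧ RT ω = true) = 0 := by
      unfold CPr
      rw [show Pr p (fun ω => Y ω = y ∧ T ω = t ∧ X ω = x ∧ RX ω = true ∧ RT ω = true) = 0
        from h0.symm, zero_div]
    rw [hchain, hz, mul_zero, ← ha, hz, mul_zero]
  · -- positive case: identify CPr RY (Y ∧ Sx) with CPr RY Cy
    have hC4 : 0 < Pr p (fun ω => (T ω, Y ω, RX ω, RT ω) = (t, y, true, true)) :=
      lt_of_lt_of_le hYS (Pr_mono p hp0 fun ω h => by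
        simp only [Prod.mk.injEq]; exact ⟨h.2.1, h.1, h.2.2.2.1, h.2.2.2.2⟩)
    have hci3 : CPr p (fun ω => RY ω = true ∧ X ω = x)
        (fun ω => (T ω, Y ω, RX ω, RT ω) = (t, y, true, true)) =
        CPr p (fun ω => RY ω = true)
          (fun ω => (T ω, Y ω, RX ω, RT ω) = (t, y, true, true)) *
        CPr p (fun ω => X ω = x)
          (fun ω => (T ω, Y ω, RX ω, RT ω) = (t, y, true, true)) :=
      hRY true x (t, y, true, true) hC4
    have hBC3 : 0 < Pr p (fun ω => X ω = x ∧ (T ω, Y ω, RX ω, RT ω) = (t, y, true, true)) :=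
      lt_of_lt_of_le hYS (Pr_mono p hp0 fun ω h => by
        simp only [Prod.mk.injEq]; exact ⟨h.2.2.1, h.2.1, h.1, h.2.2.2.1, h.2.2.2.2⟩)
    have step3 : CPr p (fun ω => RY ω = true)
        (fun ω => X ω = x ∧ (T ω, Y ω, RX ω, RT ω) = (t, y, true, true)) =
        CPr p (fun ω => RY ω = true)
          (fun ω => (T ω, Y ω, RX ω, RT ω) = (t, y, true, true)) :=
      CPr_drop p hp0 hBC3 hci3
    have step3' : CPr p (fun ω => RY ω = true)
        (fun ω => Y ω = y ∧ T ω = t ∧ X ω = x ∧ RX ω = true ∧ RT ω = true) =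
        CPr p (fun ω => RY ω = true)
          (fun ω => T ω = t ∧ Y ω = y ∧ RX ω = true ∧ RT ω = true) :=
      (CPr_congr p (fun ω => Iff.rfl)
        (fun ω => by simp only [Prod.mk.injEq]; try tauto)).trans
      (step3.trans (CPr_congr p (fun ω => Iff.rfl)
        (fun ω => by simp only [Prod.mk.injEq]; try tauto)))
    rw [hchain, step3', ha]

/-- Theorem 3, discrete form: under Assumption 3, positivity, equal observed-data
conditionals at `t`, and the full-rank (completeness) condition on the matrix `Θ_t`, the
conditional outcome distribution at treatment level `t` is identified. -/
theorem stmt_11 {𝒳 𝒯 𝒴 : Type*} [Fintype 𝒳] [Fintype 𝒯] [Fintype 𝒴]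
    [DecidableEq 𝒳] [DecidableEq 𝒴]
    (p q : Ω → ℝ)
    (hp0 : ∀ ω, 0 ≤ p ω) (hp1 : ∑ ω, p ω = 1)
    (hq0 : ∀ ω, 0 ≤ q ω) (hq1 : ∑ ω, q ω = 1)
    (X : Ω → 𝒳) (T : Ω → 𝒯) (Y : Ω → 𝒴) (RX RT RY : Ω → Bool)
    (t : 𝒯)
    (hpRX : CondIndep p RX Y (fun ω => (X ω, T ω)))
    (hpRT : CondIndep p RT Y (fun ω => (X ω, T ω, RX ω)))
    (hpRY : CondIndep p RY X (fun ω => (T ω, Y ω, RX ω, RT ω)))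
    (hqRX : CondIndep q RX Y (fun ω => (X ω, T ω)))
    (hqRT : CondIndep q RT Y (fun ω => (X ω, T ω, RX ω)))
    (hqRY : CondIndep q RY X (fun ω => (T ω, Y ω, RX ω, RT ω)))
    (hppos : ∀ x : 𝒳,
      0 < Pr p (fun ω => X ω = x ∧ T ω = t ∧ RX ω = true ∧ RT ω = true))
    (hpres : ∀ y : 𝒴,
      0 < CPr p (fun ω => RY ω = true)
        (fun ω => T ω = t ∧ Y ω = y ∧ RX ω = true ∧ RT ω = true))
    (hqpos : ∀ x : 𝒳,
      0 < Pr q (fun ω => X ω = x ∧ T ω = t ∧ RX ω = true ∧ RT ω = true))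
    (hqres : ∀ y : 𝒴,
      0 < CPr q (fun ω => RY ω = true)
        (fun ω => T ω = t ∧ Y ω = y ∧ RX ω = true ∧ RT ω = true))
    (hobs1 : ∀ (x : 𝒳) (y : 𝒴),
      CPr p (fun ω => Y ω = y ∧ RY ω = true)
          (fun ω => T ω = t ∧ X ω = x ∧ RX ω = true ∧ RT ω = true) =
        CPr q (fun ω => Y ω = y ∧ RY ω = true)
          (fun ω => T ω = t ∧ X ω = x ∧ RX ω = true ∧ RT ω = true))
    (hobs0 : ∀ x : 𝒳,
      CPr p (fun ω => RY ω = false)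
          (fun ω => T ω = t ∧ X ω = x ∧ RX ω = true ∧ RT ω = true) =
        CPr q (fun ω => RY ω = false)
          (fun ω => T ω = t ∧ X ω = x ∧ RX ω = true ∧ RT ω = true))
    (hrank : (Matrix.of fun (x : 𝒳) (y : 𝒴) =>
        CPr p (fun ω => Y ω = y ∧ RY ω = true)
          (fun ω => T ω = t ∧ X ω = x ∧ RX ω = true ∧ RT ω = true)).rank =
      Fintype.card 𝒴) :
    ∀ (x : 𝒳) (y : 𝒴),
      CPr p (fun ω => Y ω = y) (fun ω => T ω = t ∧ X ω = x) =
        CPr q (fun ω => Y ω = y) (fun ω => T ω = t ∧ X ω = x) := by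
  -- notation
  set M : Matrix 𝒳 𝒴 ℝ := Matrix.of fun (x : 𝒳) (y : 𝒴) =>
      CPr p (fun ω => Y ω = y ∧ RY ω = true)
        (fun ω => T ω = t ∧ X ω = x ∧ RX ω = true ∧ RT ω = true) with hMdef
  have keyp := key p hp0 X T Y RX RT RY t hpRX hpRT hpRY hppos
  have keyq := key q hq0 X T Y RX RT RY t hqRX hqRT hqRY hqpos
  -- abbreviations as functions
  have hMp : ∀ x y, M x y =
      CPr p (fun ω => RY ω = true)
          (fun ω => T ω = t ∧ Y ω = y ∧ RX ω = true ∧ RT ω = true) *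
        CPr p (fun ω => Y ω = y) (fun ω => T ω = t ∧ X ω = x) :=
    fun x y => keyp x y
  have hMq : ∀ x y, M x y =
      CPr q (fun ω => RY ω = true)
          (fun ω => T ω = t ∧ Y ω = y ∧ RX ω = true ∧ RT ω = true) *
        CPr q (fun ω => Y ω = y) (fun ω => T ω = t ∧ X ω = x) :=
    fun x y => (hobs1 x y).trans (keyq x y)
  -- positivity of the conditioning events
  have hpTX : ∀ x, 0 < Pr p (fun ω => T ω = t ∧ X ω = x) :=
    fun x => lt_of_lt_of_le (hppos x) (Pr_mono p hp0 fun ω h => ⟨h.2.1, h.1⟩)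
  have hqTX : ∀ x, 0 < Pr q (fun ω => T ω = t ∧ X ω = x) :=
    fun x => lt_of_lt_of_le (hqpos x) (Pr_mono q hq0 fun ω h => ⟨h.2.1, h.1⟩)
  -- row sums
  have hsump : ∀ x, ∑ y, CPr p (fun ω => Y ω = y) (fun ω => T ω = t ∧ X ω = x) = 1 :=
    fun x => CPr_sum_one p Y (hpTX x)
  have hsumq : ∀ x, ∑ y, CPr q (fun ω => Y ω = y) (fun ω => T ω = t ∧ X ω = x) = 1 :=
    fun x => CPr_sum_one q Y (hqTX x)
  -- the kernel vector
  set v : 𝒴 → ℝ := fun y =>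
      (CPr p (fun ω => RY ω = true)
        (fun ω => T ω = t ∧ Y ω = y ∧ RX ω = true ∧ RT ω = true))⁻¹ -
      (CPr q (fun ω => RY ω = true)
        (fun ω => T ω = t ∧ Y ω = y ∧ RX ω = true ∧ RT ω = true))⁻¹ with hvdef
  have hMv : M.mulVec v = 0 := by
    funext x
    have hterm : ∀ y, M x y * v y =
        CPr p (fun ω => Y ω = y) (fun ω => T ω = t ∧ X ω = x) -
        CPr q (fun ω => Y ω = y) (fun ω => T ω = t ∧ X ω = x) := by
      intro y
      have h1 : M x y * (CPr p (fun ω => RY ω = true)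
          (fun ω => T ω = t ∧ Y ω = y ∧ RX ω = true ∧ RT ω = true))⁻¹ =
          CPr p (fun ω => Y ω = y) (fun ω => T ω = t ∧ X ω = x) := by
        rw [hMp x y, mul_comm, inv_mul_cancel_left₀ (hpres y).ne']
      have h2 : M x y * (CPr q (fun ω => RY ω = true)
          (fun ω => T ω = t ∧ Y ω = y ∧ RX ω = true ∧ RT ω = true))⁻¹ =
          CPr q (fun ω => Y ω = y) (fun ω => T ω = t ∧ X ω = x) := by
        rw [hMq x y, mul_comm, inv_mul_cancel_left₀ (hqres y).ne']
      rw [hvdef]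
      dsimp only
      rw [mul_sub, h1, h2]
    show ∑ y, M x y * v y = 0
    rw [Finset.sum_congr rfl fun y _ => hterm y, Finset.sum_sub_distrib,
      hsump x, hsumq x, sub_self]
  have hker : LinearMap.ker M.mulVecLin = ⊥ := by
    have h1 := M.mulVecLin.finrank_range_add_finrank_ker
    rw [Module.finrank_fintype_fun_eq_card] at h1
    have h2 : Module.finrank ℝ (LinearMap.range M.mulVecLin) = Fintype.card 𝒴 := hrank
    rw [h2] at h1
    have h3 : Module.finrank ℝ (LinearMap.ker M.mulVecLin) = 0 := by omega
    exact Submodule.finrank_eq_zero.mp h3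
  have hv0 : v = 0 := by
    have hmem : v ∈ LinearMap.ker M.mulVecLin :=
      LinearMap.mem_ker.mpr (by rw [Matrix.mulVecLin_apply]; exact hMv)
    rw [hker, Submodule.mem_bot] at hmem
    exact hmem
  have hb : ∀ y, CPr p (fun ω => RY ω = true)
      (fun ω => T ω = t ∧ Y ω = y ∧ RX ω = true ∧ RT ω = true) =
      CPr q (fun ω => RY ω = true)
        (fun ω => T ω = t ∧ Y ω = y ∧ RX ω = true ∧ RT ω = true) := by
    intro y
    have h := congrFun hv0 y
    rw [hvdef] at h
    dsimp only at h
    exact inv_injective (sub_eq_zero.mp h)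
  intro x y
  have h1 := hMp x y
  rw [hb y] at h1
  exact mul_left_cancel₀ (hqres y).ne' (h1.symm.trans (hMq x y))
end CATEMNAR
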